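/- arXiv:2605.00210 — 3 statements merged into one kernel-verified Lean document; each statement's English description precedes it below -/
import Mathlib

section
/- Let λ ∈ ℝ with |λ| ≥ 1, let d ≥ 1 and let A = J(λ,d) be the Jordan miniblock. Let N̄ ≥ 1, let L be an N̄ × N̄ real matrix and let k ∈ ℝ. Then the matrix (I_{N̄} − k·L) ⊗ A is Schur stable if and only if for every complex eigenvalue μ of L one has |1 − k·μ| < 1/|λ|. -/
open Matrix Filter
open scoped Kronecker

/-- The `d × d` Jordan miniblock `J(λ,d)`: `λ` on the diagonal, `1` on the
superdiagonal, `0` elsewhere. -/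
def jordanBlock (lam : ℝ) (d : ℕ) : Matrix (Fin d) (Fin d) ℝ :=
  Matrix.of fun i j => if i = j then lam else if (i : ℕ) + 1 = (j : ℕ) then 1 else 0

/-- The block-diagonal selection matrix `S = diag{S_1,…,S_N̄}` where
`S_i = [I_{n i}  0]` has size `n i × d`. -/
def selMatrix (d N : ℕ) (n : Fin N → ℕ) :
    Matrix (Σ i : Fin N, Fin (n i)) (Fin N × Fin d) ℝ :=
  Matrix.of fun p q => if p.1 = q.1 ∧ (p.2 : ℕ) = (q.2 : ℕ) then 1 else 0

/-- A square real matrix is Schur stable if all of its complex eigenvalues have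
modulus strictly less than one. -/
def SchurStable {m : Type} [Fintype m] [DecidableEq m] (M : Matrix m m ℝ) : Prop :=
  ∀ μ ∈ spectrum ℂ (M.map Complex.ofReal), ‖μ‖ < 1

/-!
Ordering the indices of `(I - k L) ⊗ J(λ,d)` by the Jordan index makes it block upper
triangular with every diagonal block equal to `λ (I - k L)`. Its characteristic polynomial is
therefore a power of that of `λ (I - k L)`, so by spectral mapping its eigenvalues are exactly
the numbers `λ (1 - k μ)` with `μ` an eigenvalue of `L`.
-/

open Polynomial

namespace Matrix

variable {m n : Type*} [Fintype m] [Fintype n] [LinearOrder m] [DecidableEq n] [Nonempty n]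

theorem charpoly_kronecker_of_blockTriangular {R : Type*} [CommRing R]
    (A : Matrix n n R) {J : Matrix m m R} (hJ : J.BlockTriangular id) :
    (A ⊗ₖ J).charpoly = ∏ a, (J a a • A).charpoly := by
  have hb : (A ⊗ₖ J).BlockTriangular Prod.snd := fun p q h => by
    simp [kroneckerMap_apply, hJ h]
  rw [hb.charpoly, Finset.image_univ_of_surjective Prod.snd_surjective]
  refine Finset.prod_congr rfl fun a _ => ?_
  let e : {p : n × m // p.2 = a} ≃ n :=
    ⟨fun p => p.1.1, fun i => ⟨(i, a), rfl⟩, by rintro ⟨⟨i, _⟩, rfl⟩; rfl, fun _ => rfl⟩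
  rw [← charpoly_reindex e]
  congr 1
  ext i j
  simp [e, toSquareBlock_def, kroneckerMap_apply, mul_comm]

theorem spectrum_kronecker_of_blockTriangular {K : Type*} [Field K]
    (A : Matrix n n K) {J : Matrix m m K} (hJ : J.BlockTriangular id) :
    spectrum K (A ⊗ₖ J) = ⋃ a, spectrum K (J a a • A) := by
  ext μ
  simp only [Set.mem_iUnion, mem_spectrum_iff_isRoot_charpoly,
    charpoly_kronecker_of_blockTriangular A hJ, IsRoot.def, eval_prod,
    Finset.prod_eq_zero_iff, Finset.mem_univ, true_and]

end Matrix

theorem jordanBlock_apply_self (lam : ℝ) (d : ℕ) (i : Fin d) : jordanBlock lam d i i = lam := by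
  simp [jordanBlock]

theorem blockTriangular_jordanBlock (lam : ℝ) (d : ℕ) :
    (jordanBlock lam d).BlockTriangular id := fun i j (h : j < i) => by
  have hij : i ≠ j := h.ne'
  have hsucc : (i : ℕ) + 1 ≠ j := by omega
  simp [jordanBlock, hij, hsucc]

theorem stmt3 (lam : ℝ) (hlam : 1 ≤ |lam|) (d : ℕ) (hd : 1 ≤ d)
    (N : ℕ) (hN : 1 ≤ N) (L : Matrix (Fin N) (Fin N) ℝ) (k : ℝ) :
    SchurStable (((1 : Matrix (Fin N) (Fin N) ℝ) - k • L) ⊗ₖ jordanBlock lam d) ↔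
      ∀ μ ∈ spectrum ℂ (L.map Complex.ofReal),
        ‖(1 - (k : ℂ) * μ)‖ < 1 / |lam| := by
  have : Nonempty (Fin N) := ⟨⟨0, hN⟩⟩
  have : Nonempty (Fin d) := ⟨⟨0, hd⟩⟩
  set Lc := L.map Complex.ofReal
  set Jc := (jordanBlock lam d).map Complex.ofReal
  let p : ℂ[X] := C (lam : ℂ) * (1 - C (k : ℂ) * X)
  have hmap : (((1 : Matrix (Fin N) (Fin N) ℝ) - k • L) ⊗ₖ jordanBlock lam d).map
      Complex.ofReal = (1 - (k : ℂ) • Lc) ⊗ₖ Jc := by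
    ext ⟨i, a⟩ ⟨j, b⟩
    simp [Lc, Jc, Matrix.kroneckerMap_apply, Matrix.one_apply, apply_ite Complex.ofReal]
  have hJc : Jc.BlockTriangular id := (blockTriangular_jordanBlock lam d).map Complex.ofRealHom
  have hspec : spectrum ℂ ((((1 : Matrix (Fin N) (Fin N) ℝ) - k • L) ⊗ₖ
      jordanBlock lam d).map Complex.ofReal) = (fun ν => eval ν p) '' spectrum ℂ Lc := by
    have hdiag (a : Fin d) : Jc a a = lam := by simp [Jc, jordanBlock_apply_self]
    have haeval : aeval Lc p = (lam : ℂ) • (1 - (k : ℂ) • Lc) := by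
      simp [p, Algebra.smul_def]
    rw [hmap, Matrix.spectrum_kronecker_of_blockTriangular _ hJc]
    simp only [hdiag, Set.iUnion_const]
    rw [← haeval, spectrum.map_polynomial_aeval_of_nonempty]
    exact spectrum.nonempty_of_isAlgClosed_of_finiteDimensional ℂ Lc
  have hlam_pos : 0 < |lam| := one_pos.trans_le hlam
  rw [SchurStable, hspec, Set.forall_mem_image]
  refine forall₂_congr fun ν _ => ?_
  simp only [p, eval_mul, eval_C, eval_sub, eval_one, eval_X, norm_mul, Complex.norm_real,
    Real.norm_eq_abs]
  rw [lt_div_iff₀ hlam_pos, mul_comm]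
end

section
/- Let λ ∈ ℝ with |λ| ≥ 1, let N̄ ≥ 1, let L be an N̄ × N̄ real matrix that is symmetric and positive definite, and let μ_m and μ_M denote respectively the smallest and largest (real) eigenvalue of L. Then there exists k ∈ ℝ such that λ·(I_{N̄} − k·L) is Schur stable if and only if μ_M·(|λ| − 1) < μ_m·(|λ| + 1); in particular, when |λ| > 1 this condition reads μ_M/μ_m < (|λ| + 1)/(|λ| − 1). -/
open Matrix Filter
open scoped Kronecker

/-!
The eigenvalues of `λ (I - k L)` are `λ (1 - k μ)` for `μ` in the (real) spectrum of `L`.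
If they all lie in the open unit disc and `|λ| > 1`, evaluating at `μ_m` and `μ_M` gives
`|λ| - 1 < |λ| k μ_m` and `|λ| k μ_M < |λ| + 1`, hence `k > 0` and
`μ_M (|λ| - 1) < |λ| k μ_m μ_M < μ_m (|λ| + 1)`. Conversely `k = 2 / (μ_m + μ_M)` gives
`|1 - k μ| ≤ (μ_M - μ_m) / (μ_M + μ_m)` on `[μ_m, μ_M]`, and the condition says exactly that
`|λ|` times this bound is below `1`.
-/

section Spectrum

variable {n : Type*} [Fintype n] [DecidableEq n]

theorem Matrix.IsHermitian.spectrum_map_ofReal {M : Matrix n n ℝ} (hM : M.IsHermitian) :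
    spectrum ℂ (M.map Complex.ofReal) = Complex.ofReal '' spectrum ℝ M := by
  have hmem (x : ℝ) : (x : ℂ) ∈ spectrum ℂ (M.map Complex.ofReal) ↔ x ∈ spectrum ℝ M := by
    rw [mem_spectrum_iff_isRoot_charpoly, mem_spectrum_iff_isRoot_charpoly]
    change (M.map Complex.ofRealHom).charpoly.IsRoot (Complex.ofRealHom x) ↔ _
    rw [charpoly_map]
    exact Polynomial.isRoot_map_iff Complex.ofReal_injective
  have hMc : (M.map Complex.ofReal).IsHermitian := hM.map _ fun _ => by simp
  apply subset_antisymm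
  · intro z hz
    obtain ⟨_, ⟨i, rfl⟩, rfl⟩ := hMc.spectrum_eq_image_range ▸ hz
    exact ⟨_, (hmem _).1 hz, rfl⟩
  · rintro _ ⟨x, hx, rfl⟩
    exact (hmem x).2 hx

theorem Matrix.PosDef.pos_of_mem_spectrum_real {A : Matrix n n ℝ}
    (hA : A.PosDef) {μ : ℝ} (hμ : μ ∈ spectrum ℝ A) : 0 < μ := by
  obtain ⟨i, rfl⟩ := hA.1.spectrum_real_eq_range_eigenvalues ▸ hμ
  exact hA.eigenvalues_pos i

open Polynomial in
theorem Matrix.map_ofReal_smul_one_sub_smul (L : Matrix n n ℝ) (c k : ℝ) :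
    (c • (1 - k • L)).map Complex.ofReal
      = aeval (L.map Complex.ofReal) (C (c : ℂ) * (1 - C (k : ℂ) * X)) := by
  simp [Algebra.algebraMap_eq_smul_one, Matrix.map_sub, Matrix.map_smul']

end Spectrum

theorem schurStable_smul_one_sub_smul_iff {n : Type} [Fintype n] [DecidableEq n]
    {L : Matrix n n ℝ} (hL : L.IsHermitian) (c k : ℝ) :
    SchurStable (c • (1 - k • L)) ↔ ∀ μ ∈ spectrum ℝ L, |c * (1 - k * μ)| < 1 := by
  rcases isEmpty_or_nonempty n with hn | hn
  · simp [SchurStable, spectrum.of_subsingleton]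
  have hne : (spectrum ℂ (L.map Complex.ofReal)).Nonempty :=
    spectrum.nonempty_of_isAlgClosed_of_finiteDimensional ℂ _
  simp only [SchurStable, map_ofReal_smul_one_sub_smul,
    spectrum.map_polynomial_aeval_of_nonempty _ _ hne, hL.spectrum_map_ofReal, Set.image_image,
    Set.forall_mem_image]
  refine forall₂_congr fun μ _ => ?_
  rw [← Real.norm_eq_abs, ← Complex.norm_real]
  simp

theorem abs_one_sub_two_div_add_mul_le {m M μ : ℝ} (hm : 0 < m) (hmμ : m ≤ μ) (hμM : μ ≤ M) :
    |1 - 2 / (m + M) * μ| ≤ (M - m) / (m + M) := by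
  have hsum : 0 < m + M := by linarith
  rw [show 1 - 2 / (m + M) * μ = (m + M - 2 * μ) / (m + M) by field_simp,
    abs_div, abs_of_pos hsum]
  gcongr
  exact abs_le.2 ⟨by linarith, by linarith⟩

theorem exists_forall_abs_mul_one_sub_mul_lt_one_iff {S : Set ℝ} {m M : ℝ}
    (hm : IsLeast S m) (hM : IsGreatest S M) (hm0 : 0 < m) (c : ℝ) :
    (∃ k : ℝ, ∀ μ ∈ S, |c * (1 - k * μ)| < 1) ↔ M * (|c| - 1) < m * (|c| + 1) := by
  have hmM : m ≤ M := hm.2 hM.1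
  constructor
  · rintro ⟨k, hk⟩
    rcases le_or_gt |c| 1 with hc | hc
    · nlinarith [abs_nonneg c]
    have hkm : |c| * (1 - k * m) < 1 :=
      calc |c| * (1 - k * m) ≤ |c| * |1 - k * m| := by gcongr; exact le_abs_self _
        _ < 1 := abs_mul c _ ▸ hk m hm.1
    have hkM : |c| * (k * M - 1) < 1 :=
      calc |c| * (k * M - 1) ≤ |c| * |1 - k * M| := by
            gcongr; exact neg_sub 1 (k * M) ▸ neg_le_abs _
        _ < 1 := abs_mul c _ ▸ hk M hM.1
    have hk0 : 0 < k := by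
      by_contra! hk0
      nlinarith [mul_nonpos_of_nonpos_of_nonneg hk0 hm0.le]
    nlinarith
  · intro h
    refine ⟨2 / (m + M), fun μ hμ => ?_⟩
    calc |c * (1 - 2 / (m + M) * μ)| = |c| * |1 - 2 / (m + M) * μ| := abs_mul _ _
      _ ≤ |c| * ((M - m) / (m + M)) := by
        gcongr
        exact abs_one_sub_two_div_add_mul_le hm0 (hm.2 hμ) (hM.2 hμ)
      _ < 1 := by
        rw [← mul_div_assoc, div_lt_one (by linarith)]
        linarith

theorem stmt7_general (lam : ℝ)
    (N : ℕ) (L : Matrix (Fin N) (Fin N) ℝ)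
    (hpd : L.PosDef)
    (μm μM : ℝ) (hμm : IsLeast (spectrum ℝ L) μm) (hμM : IsGreatest (spectrum ℝ L) μM) :
    ((∃ k : ℝ, SchurStable (lam • ((1 : Matrix (Fin N) (Fin N) ℝ) - k • L))) ↔
        μM * (|lam| - 1) < μm * (|lam| + 1)) ∧
      (1 < |lam| →
        ((∃ k : ℝ, SchurStable (lam • ((1 : Matrix (Fin N) (Fin N) ℝ) - k • L))) ↔
          μM / μm < (|lam| + 1) / (|lam| - 1))) := by
  have hμm0 : 0 < μm := hpd.pos_of_mem_spectrum_real hμm.1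
  have hstable : (∃ k : ℝ, SchurStable (lam • ((1 : Matrix (Fin N) (Fin N) ℝ) - k • L))) ↔
      μM * (|lam| - 1) < μm * (|lam| + 1) := by
    simp_rw [schurStable_smul_one_sub_smul_iff hpd.1]
    exact exists_forall_abs_mul_one_sub_mul_lt_one_iff hμm hμM hμm0 lam
  refine ⟨hstable, fun hlam => hstable.trans ?_⟩
  rw [div_lt_div_iff₀ hμm0 (sub_pos.2 hlam), mul_comm (|lam| + 1)]

theorem stmt7 (lam : ℝ) (hlam : 1 ≤ |lam|)
    (N : ℕ) (hN : 1 ≤ N) (L : Matrix (Fin N) (Fin N) ℝ)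
    (hsymm : L.IsSymm) (hpd : L.PosDef)
    (μm μM : ℝ) (hμm : IsLeast (spectrum ℝ L) μm) (hμM : IsGreatest (spectrum ℝ L) μM) :
    ((∃ k : ℝ, SchurStable (lam • ((1 : Matrix (Fin N) (Fin N) ℝ) - k • L))) ↔
        μM * (|lam| - 1) < μm * (|lam| + 1)) ∧
      (1 < |lam| →
        ((∃ k : ℝ, SchurStable (lam • ((1 : Matrix (Fin N) (Fin N) ℝ) - k • L))) ↔
          μM / μm < (|lam| + 1) / (|lam| - 1))) :=
  stmt7_general lam N L hpd μm μM hμm hμM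
end

section
/- Let d ≥ 1, let N̄ ≥ 1, let L be an N̄ × N̄ symmetric real matrix with smallest eigenvalue μ_m and largest eigenvalue μ_M, let n : Fin N̄ → ℕ satisfy 1 ≤ n i ≤ d for all i, and let S be the associated block-diagonal selection matrix. Then every complex eigenvalue of S · (L ⊗ I_d) · Sᵀ is real and lies in the closed interval [μ_m, μ_M]. -/
/-!
Since `S Sᵀ = I`, the Loewner-order bounds `μm • I ≤ L ≤ μM • I` survive the compression
`L ↦ S (L ⊗ I) Sᵀ`, which is again symmetric, so its real spectrum lies in `[μm, μM]`.
Every complex eigenvalue of a real symmetric matrix is one of its real eigenvalues.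
-/

open Matrix Filter
open scoped Kronecker

open scoped MatrixOrder ComplexOrder

namespace Matrix

variable {𝕜 l m k : Type*} [RCLike 𝕜] [Fintype m] [Fintype k] [DecidableEq k]

lemma isHermitian_mul_kronecker_one_mul_conjTranspose (S : Matrix l (m × k) 𝕜)
    {L : Matrix m m 𝕜} (hL : L.IsHermitian) :
    (S * (L ⊗ₖ (1 : Matrix k k 𝕜)) * Sᴴ).IsHermitian :=
  isHermitian_mul_mul_conjTranspose S <| by
    rw [IsHermitian, conjTranspose_kronecker, hL.eq, conjTranspose_one]

variable [Fintype l]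

lemma mul_kronecker_one_mul_conjTranspose_mono (S : Matrix l (m × k) 𝕜) {A B : Matrix m m 𝕜}
    (h : A ≤ B) : S * (A ⊗ₖ (1 : Matrix k k 𝕜)) * Sᴴ ≤ S * (B ⊗ₖ (1 : Matrix k k 𝕜)) * Sᴴ := by
  rw [← add_sub_cancel A B, add_kronecker, Matrix.mul_add, Matrix.add_mul]
  exact le_add_of_nonneg_right
    (((le_iff.1 h).kronecker PosSemidef.one).mul_mul_conjTranspose_same S).nonneg

variable [DecidableEq l] [DecidableEq m]

lemma mul_algebraMap_kronecker_one_mul_conjTranspose {S : Matrix l (m × k) 𝕜}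
    (hS : S * Sᴴ = 1) (c : ℝ) :
    S * (algebraMap ℝ (Matrix m m 𝕜) c ⊗ₖ (1 : Matrix k k 𝕜)) * Sᴴ =
      algebraMap ℝ (Matrix l l 𝕜) c := by
  simp only [Algebra.algebraMap_eq_smul_one, smul_kronecker, one_kronecker_one, Matrix.mul_smul,
    Matrix.smul_mul, Matrix.mul_one, hS]

lemma spectrum_mul_kronecker_one_mul_conjTranspose_subset {L : Matrix m m 𝕜} (hL : L.IsHermitian)
    {S : Matrix l (m × k) 𝕜} (hS : S * Sᴴ = 1) {a b : ℝ} (hab : spectrum ℝ L ⊆ Set.Icc a b) :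
    spectrum ℝ (S * (L ⊗ₖ (1 : Matrix k k 𝕜)) * Sᴴ) ⊆ Set.Icc a b := by
  have hM := (isHermitian_mul_kronecker_one_mul_conjTranspose S (k := k) hL).isSelfAdjoint
  have ha : algebraMap ℝ _ a ≤ L :=
    (algebraMap_le_iff_le_spectrum hL.isSelfAdjoint).2 fun x hx => (hab hx).1
  have hb : L ≤ algebraMap ℝ _ b :=
    (le_algebraMap_iff_spectrum_le hL.isSelfAdjoint).2 fun x hx => (hab hx).2
  have ha' := mul_kronecker_one_mul_conjTranspose_mono S (k := k) ha
  have hb' := mul_kronecker_one_mul_conjTranspose_mono S (k := k) hb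
  rw [mul_algebraMap_kronecker_one_mul_conjTranspose hS] at ha' hb'
  exact fun x hx => ⟨(algebraMap_le_iff_le_spectrum hM).1 ha' x hx,
    (le_algebraMap_iff_spectrum_le hM).1 hb' x hx⟩

end Matrix

lemma Matrix.IsHermitian.spectrum_map_ofReal_subset {n : Type*} [Fintype n] [DecidableEq n]
    {A : Matrix n n ℝ} (hA : A.IsHermitian) :
    spectrum ℂ (A.map Complex.ofReal) ⊆ Complex.ofReal '' spectrum ℝ A := by
  have hAc : (A.map Complex.ofReal).IsHermitian := hA.map _ fun x => (Complex.conj_ofReal x).symm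
  rw [hAc.spectrum_eq_image_range]
  rintro _ ⟨_, ⟨i, rfl⟩, rfl⟩
  exact ⟨_, AlgHom.spectrum_apply_subset (Algebra.ofId ℝ ℂ).mapMatrix A
    (hAc.eigenvalues_mem_spectrum_real i), rfl⟩

lemma selMatrix_eq_submatrix_one {d N : ℕ} {n : Fin N → ℕ} (hnd : ∀ i, n i ≤ d) :
    selMatrix d N n = (1 : Matrix (Fin N × Fin d) (Fin N × Fin d) ℝ).submatrix
      (fun p => (p.1, Fin.castLE (hnd p.1) p.2)) id := by
  ext p q
  simp [selMatrix, one_apply, Prod.ext_iff, Fin.ext_iff]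

lemma selMatrix_mul_transpose {d N : ℕ} {n : Fin N → ℕ} (hnd : ∀ i, n i ≤ d) :
    selMatrix d N n * (selMatrix d N n)ᵀ = 1 := by
  have hinj : Function.Injective fun p : (Σ i, Fin (n i)) => (p.1, Fin.castLE (hnd p.1) p.2) := by
    rintro ⟨i, a⟩ ⟨j, b⟩ h
    obtain ⟨rfl, hab⟩ := Prod.ext_iff.1 h
    simpa [Fin.castLE_inj] using hab
  rw [selMatrix_eq_submatrix_one hnd, transpose_submatrix, transpose_one,
    ← submatrix_mul _ _ _ _ _ Function.bijective_id, Matrix.mul_one, submatrix_one _ hinj]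

theorem stmt10_general (d : ℕ)
    (N : ℕ) (L : Matrix (Fin N) (Fin N) ℝ) (hsymm : L.IsSymm)
    (μm μM : ℝ) (hμm : IsLeast (spectrum ℝ L) μm) (hμM : IsGreatest (spectrum ℝ L) μM)
    (n : Fin N → ℕ) (hnd : ∀ i, n i ≤ d) :
    ∀ μ ∈ spectrum ℂ ((selMatrix d N n *
        (L ⊗ₖ (1 : Matrix (Fin d) (Fin d) ℝ)) * (selMatrix d N n)ᵀ).map Complex.ofReal),
      μ.im = 0 ∧ μm ≤ μ.re ∧ μ.re ≤ μM := by
  have hL : L.IsHermitian := isHermitian_iff_isSymm.2 hsymm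
  have hS : selMatrix d N n * (selMatrix d N n)ᴴ = 1 := by
    rw [conjTranspose_eq_transpose_of_trivial, selMatrix_mul_transpose hnd]
  rw [← conjTranspose_eq_transpose_of_trivial]
  intro μ hμ
  obtain ⟨x, hx, rfl⟩ :=
    (isHermitian_mul_kronecker_one_mul_conjTranspose _ hL).spectrum_map_ofReal_subset hμ
  obtain ⟨hxm, hxM⟩ := spectrum_mul_kronecker_one_mul_conjTranspose_subset hL hS
    (fun y hy => ⟨hμm.2 hy, hμM.2 hy⟩) hx
  exact ⟨Complex.ofReal_im x, hxm, hxM⟩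

theorem stmt10 (d : ℕ) (hd : 1 ≤ d)
    (N : ℕ) (hN : 1 ≤ N) (L : Matrix (Fin N) (Fin N) ℝ) (hsymm : L.IsSymm)
    (μm μM : ℝ) (hμm : IsLeast (spectrum ℝ L) μm) (hμM : IsGreatest (spectrum ℝ L) μM)
    (n : Fin N → ℕ) (hn1 : ∀ i, 1 ≤ n i) (hnd : ∀ i, n i ≤ d) :
    ∀ μ ∈ spectrum ℂ ((selMatrix d N n *
        (L ⊗ₖ (1 : Matrix (Fin d) (Fin d) ℝ)) * (selMatrix d N n)ᵀ).map Complex.ofReal),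
      μ.im = 0 ∧ μm ≤ μ.re ∧ μ.re ≤ μM :=
  stmt10_general d N L hsymm μm μM hμm hμM n hnd
end
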